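/- Let N be a normal operator on a finite-dimensional Krein space and λ ∈ σ(N) such that the indefinite inner product [·,·] is positive definite on ker(N - λ). Then ker(N - λ) = ker(N⁺ - λ̄), and both coincide with the generalized eigenspaces (root subspaces) of N at λ and of N⁺ at λ̄. -/

import Mathlib

/-! Put `A = N - λ` and `A⁺ = N⁺ - λ̄`, so that `A` and `A⁺` commute. For `x ∈ ker A` the vector
`A⁺x` lies in `ker A` and `[A⁺x, A⁺x] = [x, A A⁺x] = 0`, so definiteness forces `A⁺x = 0`:
`ker A ⊆ ker A⁺`. In finite dimension `ker A⁺ = J (ker A*)` has the same dimension as `ker A`,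
hence equality. Finally, if `A²x = 0` then `Ax ∈ ker A ⊆ ker A⁺` and `[Ax, Ax] = [x, A⁺Ax] = 0`,
so `Ax = 0`; by induction `ker Aᵏ = ker A`, and symmetrically for `A⁺`. -/

open Filter Topology ContinuousLinearMap

noncomputable section

variable {H : Type*} [NormedAddCommGroup H] [InnerProductSpace ℂ H] [CompleteSpace H]

def kadj (J T : H →L[ℂ] H) : H →L[ℂ] H := J ∘L (ContinuousLinearMap.adjoint T) ∘L J

def ApproxEig (T : H →L[ℂ] H) (l : ℂ) (x : ℕ → H) : Prop :=
  (∀ n, ‖x n‖ = 1) ∧ Tendsto (fun n => T (x n) - l • x n) atTop (nhds 0)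

def approxSpec (T : H →L[ℂ] H) : Set ℂ := {l | ∃ x : ℕ → H, ApproxEig T l x}

def posType (J T : H →L[ℂ] H) : Set ℂ :=
  {l | l ∈ approxSpec T ∧ ∀ x : ℕ → H, ApproxEig T l x →
      0 < Filter.liminf (fun n => (inner ℂ (J (x n)) (x n) : ℂ).re) Filter.atTop}

lemma involutive_of_comp_self_eq_one {R M : Type*} [Semiring R] [TopologicalSpace M]
    [AddCommMonoid M] [Module R M] {J : M →L[R] M} (hJ2 : J ∘L J = 1) :
    Function.Involutive J :=
  fun x => congr($hJ2 x)

section KreinAdjoint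

variable {J : H →L[ℂ] H}

lemma kadj_kadj (hJ : adjoint J = J) (hJ2 : J ∘L J = 1) (T : H →L[ℂ] H) :
    kadj J (kadj J T) = T := by
  ext x
  simp [kadj, hJ, involutive_of_comp_self_eq_one hJ2 _]

lemma inner_kadj_right (hJ : adjoint J = J) (hJ2 : J ∘L J = 1) (T : H →L[ℂ] H) (x y : H) :
    inner ℂ (J x) (kadj J T y) = inner ℂ (J (T x)) y := by
  have hJ_inner (a b : H) : inner ℂ (J a) b = inner ℂ a (J b) := by
    rw [← adjoint_inner_right, hJ]
  rw [hJ_inner, kadj, comp_apply, comp_apply, involutive_of_comp_self_eq_one hJ2,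
    adjoint_inner_right, hJ_inner]

lemma kadj_sub_smul_one (hJ2 : J ∘L J = 1) (T : H →L[ℂ] H) (l : ℂ) :
    kadj J (T - l • 1) = kadj J T - starRingEnd ℂ l • 1 := by
  ext x
  simp [kadj, ← star_eq_adjoint, involutive_of_comp_self_eq_one hJ2 _]

lemma finrank_ker_kadj [FiniteDimensional ℂ H] (hJ2 : J ∘L J = 1) (T : H →L[ℂ] H) :
    Module.finrank ℂ (kadj J T).ker = Module.finrank ℂ T.ker := by
  let eJ : H ≃ₗ[ℂ] H := LinearEquiv.ofInvolutive (J : H →ₗ[ℂ] H)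
    (involutive_of_comp_self_eq_one hJ2)
  have hker : (kadj J T).ker = (adjoint T).ker.comap (eJ : H →ₗ[ℂ] H) := by
    ext x
    simp [eJ, kadj, (involutive_of_comp_self_eq_one hJ2).injective.eq_iff' (map_zero J)]
  have h₁ := LinearMap.finrank_range_add_finrank_ker (T : H →ₗ[ℂ] H)
  have h₂ := T.range.finrank_add_finrank_orthogonal
  rw [hker, Submodule.comap_equiv_eq_map_symm, LinearEquiv.finrank_map_eq, ← orthogonal_range]
  omega

end KreinAdjoint

section KernelOfKreinNormal

variable {J A : H →L[ℂ] H}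

lemma ker_le_ker_kadj (hJ : adjoint J = J) (hJ2 : J ∘L J = 1) (hcomm : Commute A (kadj J A))
    (hdef : ∀ y, A y = 0 → inner ℂ (J y) y = 0 → y = 0) : A.ker ≤ (kadj J A).ker := by
  intro x (hx : A x = 0)
  have hy : A (kadj J A x) = 0 := by
    change (A * kadj J A) x = 0
    rw [hcomm.eq, mul_apply_eq_comp, hx, map_zero]
  show kadj J A x = 0
  exact hdef _ hy (by rw [← inner_kadj_right hJ hJ2, kadj_kadj hJ hJ2, hy, inner_zero_right])

lemma ker_kadj_eq_ker [FiniteDimensional ℂ H] (hJ : adjoint J = J) (hJ2 : J ∘L J = 1)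
    (hcomm : Commute A (kadj J A))
    (hdef : ∀ y, A y = 0 → inner ℂ (J y) y = 0 → y = 0) : (kadj J A).ker = A.ker :=
  (Submodule.eq_of_le_of_finrank_le (ker_le_ker_kadj hJ hJ2 hcomm hdef)
    (finrank_ker_kadj hJ2 A).le).symm

lemma ker_pow_le_ker (hJ : adjoint J = J) (hJ2 : J ∘L J = 1) (hker : A.ker ≤ (kadj J A).ker)
    (hdef : ∀ y, A y = 0 → inner ℂ (J y) y = 0 → y = 0) (k : ℕ) : (A ^ k).ker ≤ A.ker := by
  induction k with
  | zero => simp [one_def]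
  | succ k ih =>
    intro x (hx : (A ^ (k + 1)) x = 0)
    rw [pow_succ, mul_apply_eq_comp] at hx
    have hAx : A (A x) = 0 := ih hx
    have hneutral : inner ℂ (J (A x)) (A x) = 0 := by
      rw [← inner_kadj_right hJ hJ2, show kadj J A (A x) = 0 from hker hAx, inner_zero_right]
    exact hdef _ hAx hneutral

end KernelOfKreinNormal

theorem finiteDim_posdef_ker_general (J N : H →L[ℂ] H) [FiniteDimensional ℂ H]
    (hJ : ContinuousLinearMap.adjoint J = J) (hJ2 : J ∘L J = 1)
    (hN : N ∘L kadj J N = kadj J N ∘L N)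
    (l : ℂ)
    (hpos : ∀ x : H, N x = l • x → x ≠ 0 → 0 < (inner ℂ (J x) x : ℂ).re) :
    (∀ x : H, N x = l • x ↔ kadj J N x = (starRingEnd ℂ) l • x) ∧
      (∀ (k : ℕ) (x : H), ((N - l • (1 : H →L[ℂ] H)) ^ k) x = 0 → N x = l • x) ∧
      (∀ (k : ℕ) (x : H), ((kadj J N - (starRingEnd ℂ) l • (1 : H →L[ℂ] H)) ^ k) x = 0 →
        kadj J N x = (starRingEnd ℂ) l • x) := by
  set A := N - l • (1 : H →L[ℂ] H)
  have hkadj : kadj J A = kadj J N - starRingEnd ℂ l • 1 := kadj_sub_smul_one hJ2 N l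
  have hA (x : H) : A x = 0 ↔ N x = l • x := by simp [A, sub_eq_zero]
  have hA' (x : H) : kadj J A x = 0 ↔ kadj J N x = starRingEnd ℂ l • x := by
    simp [hkadj, sub_eq_zero]
  have hcomm : Commute A (kadj J A) := by
    rw [hkadj]
    have hnormal : Commute N (kadj J N) := hN
    exact (hnormal.sub_right ((Commute.one_right N).smul_right _)).sub_left
      ((Commute.one_left _).smul_left l)
  have hdef (y : H) (hy : A y = 0) (hneutral : inner ℂ (J y) y = 0) : y = 0 := by
    by_contra hne
    simpa [hneutral] using hpos y ((hA y).mp hy) hne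
  have hker : (kadj J A).ker = A.ker := ker_kadj_eq_ker hJ hJ2 hcomm hdef
  have hdef' (y : H) (hy : kadj J A y = 0) : inner ℂ (J y) y = 0 → y = 0 :=
    hdef y (show y ∈ A.ker from hker ▸ hy)
  refine ⟨fun x => ?_, fun k x hx => ?_, fun k x hx => ?_⟩
  · rw [← hA, ← hA']
    exact (SetLike.ext_iff.mp hker x).symm
  · exact (hA x).mp (ker_pow_le_ker hJ hJ2 hker.ge hdef k hx)
  · rw [← hkadj] at hx
    exact (hA' x).mp (ker_pow_le_ker hJ hJ2 (by rw [kadj_kadj hJ hJ2, hker]) hdef' k hx)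

theorem finiteDim_posdef_ker (J N : H →L[ℂ] H) [FiniteDimensional ℂ H]
    (hJ : ContinuousLinearMap.adjoint J = J) (hJ2 : J ∘L J = 1)
    (hN : N ∘L kadj J N = kadj J N ∘L N)
    (l : ℂ) (hl : l ∈ spectrum ℂ N)
    (hpos : ∀ x : H, N x = l • x → x ≠ 0 → 0 < (inner ℂ (J x) x : ℂ).re) :
    (∀ x : H, N x = l • x ↔ kadj J N x = (starRingEnd ℂ) l • x) ∧
      (∀ (k : ℕ) (x : H), ((N - l • (1 : H →L[ℂ] H)) ^ k) x = 0 → N x = l • x) ∧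
      (∀ (k : ℕ) (x : H), ((kadj J N - (starRingEnd ℂ) l • (1 : H →L[ℂ] H)) ^ k) x = 0 →
        kadj J N x = (starRingEnd ℂ) l • x) :=
  finiteDim_posdef_ker_general J N hJ hJ2 hN l hpos
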